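/- arXiv:0904.3514 — 11 statements merged into one kernel-verified Lean document; each statement's English description precedes it below -/
import Mathlib

section
/- Let A, B be finite nonempty sets of integers with min A = min B = 0, max A = M, max B = N, M ≥ N. If the number of holes in A (i.e., |[0,M] \ A|) is at most |B| - 1, then the entire interval [N, M] is contained in A + B. -/
open scoped Pointwise

/-- Pigeonhole: the `|B|` distinct points `x - b` of `S` cannot all be holes of `A`. -/
theorem Finset.mem_add_of_card_sdiff_lt {α : Type*} [AddCommGroup α] [DecidableEq α]
    {A B S : Finset α} {x : α} (hS : ∀ b ∈ B, x - b ∈ S) (hcard : (S \ A).card < B.card) :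
    x ∈ A + B := by
  by_contra hx
  have hholes : B.image (x - ·) ⊆ S \ A := by
    intro y hy
    obtain ⟨b, hb, rfl⟩ := Finset.mem_image.1 hy
    refine Finset.mem_sdiff.2 ⟨hS b hb, fun ha => hx ?_⟩
    exact Finset.mem_add.2 ⟨x - b, ha, b, hb, sub_add_cancel x b⟩
  have := Finset.card_le_card hholes
  rw [Finset.card_image_of_injective B sub_right_injective] at this
  omega

theorem stmt0_general (A B : Finset ℤ) (hB : B.Nonempty) (M N : ℤ)
    (hminB : B.min' hB = 0)
    (hmaxB : B.max' hB = N)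
    (hhole : ((Finset.Icc 0 M \ A).card : ℤ) ≤ (B.card : ℤ) - 1) :
    Finset.Icc N M ⊆ A + B := by
  intro x hx
  rw [Finset.mem_Icc] at hx
  refine Finset.mem_add_of_card_sdiff_lt (S := Finset.Icc 0 M) (fun b hb => ?_) (by omega)
  have hb0 : 0 ≤ b := hminB ▸ B.min'_le b hb
  have hbN : b ≤ N := hmaxB ▸ B.le_max' b hb
  rw [Finset.mem_Icc]
  omega

theorem stmt0 (A B : Finset ℤ) (hA : A.Nonempty) (hB : B.Nonempty) (M N : ℤ)
    (hminA : A.min' hA = 0) (hminB : B.min' hB = 0)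
    (hmaxA : A.max' hA = M) (hmaxB : B.max' hB = N) (hMN : N ≤ M)
    (hhole : ((Finset.Icc 0 M \ A).card : ℤ) ≤ (B.card : ℤ) - 1) :
    Finset.Icc N M ⊆ A + B :=
  stmt0_general A B hB M N hminB hmaxB hhole
end

section
/- Let A, B be finite nonempty sets of integers with min A = min B = 0, max A = M, max B = N, and M ≥ N. If x ∈ [0, N] and x ∉ A + B, then |[0,x] \ A| + |[0,x] \ B| ≥ x + 1. -/
/-!
If `x ∉ A + B`, then for every `t` either `t ∉ A` or `x - t ∉ B`. Since `t ↦ x - t` maps `[0, x]`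
onto itself, every point of `[0, x]` is a hole of `A` or the reflection of a hole of `B`.
-/

open scoped Pointwise

namespace Finset

variable {α : Type*} [AddCommGroup α] [DecidableEq α]

theorem card_le_card_sdiff_add_card_sdiff_of_notMem_add {A B S : Finset α} {x : α}
    (hx : x ∉ A + B) (hS : ∀ t ∈ S, x - t ∈ S) :
    S.card ≤ (S \ A).card + (S \ B).card := by
  have hcover : S ⊆ (S \ A) ∪ (S \ B).image (x - ·) := by
    intro t ht
    by_cases htA : t ∈ A
    · have hxtB : x - t ∉ B := fun hxtB ↦ hx (by simpa using add_mem_add htA hxtB)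
      exact mem_union_right _ (mem_image.mpr ⟨x - t, mem_sdiff.mpr ⟨hS t ht, hxtB⟩, by simp⟩)
    · exact mem_union_left _ (mem_sdiff.mpr ⟨ht, htA⟩)
  calc S.card ≤ ((S \ A) ∪ (S \ B).image (x - ·)).card := card_le_card hcover
    _ ≤ (S \ A).card + ((S \ B).image (x - ·)).card := card_union_le _ _
    _ ≤ (S \ A).card + (S \ B).card := Nat.add_le_add_left card_image_le _

end Finset

theorem stmt1_general (A B : Finset ℤ)
    (x : ℤ) (hxAB : x ∉ A + B) :
    x + 1 ≤ ((Finset.Icc 0 x \ A).card : ℤ) + ((Finset.Icc 0 x \ B).card : ℤ) := by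
  have hreflect : ∀ t ∈ Finset.Icc 0 x, x - t ∈ Finset.Icc 0 x := by
    intro t ht
    rw [Finset.mem_Icc] at ht ⊢
    omega
  calc x + 1 ≤ ((x + 1).toNat : ℤ) := Int.self_le_toNat _
    _ = (Finset.Icc 0 x).card := by rw [Int.card_Icc, sub_zero]
    _ ≤ _ := mod_cast Finset.card_le_card_sdiff_add_card_sdiff_of_notMem_add hxAB hreflect

theorem stmt1 (A B : Finset ℤ) (hA : A.Nonempty) (hB : B.Nonempty) (M N : ℤ)
    (hminA : A.min' hA = 0) (hminB : B.min' hB = 0)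
    (hmaxA : A.max' hA = M) (hmaxB : B.max' hB = N) (hMN : N ≤ M)
    (x : ℤ) (hx : x ∈ Finset.Icc 0 N) (hxAB : x ∉ A + B) :
    x + 1 ≤ ((Finset.Icc 0 x \ A).card : ℤ) + ((Finset.Icc 0 x \ B).card : ℤ) :=
  stmt1_general A B x hxAB
end

section
/- Let A, B be finite nonempty sets of integers with min A = min B = 0, max A = M, max B = N, and M ≥ N. If x ∈ [0, N] and x + M ∉ A + B, then |[x+M-N, M] \ A| + |[x, N] \ B| ≥ N - x + 1. -/
open scoped Pointwise

open Finset

/-- If `c ∉ A + B`, then each `t ∈ s ∩ B` has `c - t ∉ A`, so `t ↦ c - t` injects `s ∩ B` into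
`(c - s) \ A`. -/
theorem card_le_card_sdiff_add_card_image_sub_sdiff {G : Type*} [AddCommGroup G] [DecidableEq G]
    {A B : Finset G} {c : G} (hc : c ∉ A + B) (s : Finset G) :
    #s ≤ #(s \ B) + #(s.image (c - ·) \ A) := by
  have hinter : #(s ∩ B) ≤ #(s.image (c - ·) \ A) := by
    refine card_le_card_of_injOn (c - ·) (fun t ht => ?_) (sub_right_injective.injOn)
    obtain ⟨hts, htB⟩ := mem_inter.mp (mem_coe.mp ht)
    refine mem_sdiff.mpr ⟨mem_image_of_mem _ hts, fun hA => hc ?_⟩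
    simpa using add_mem_add hA htB
  rw [← card_sdiff_add_card_inter s B]
  exact Nat.add_le_add_left hinter _

theorem Int.image_const_sub_Icc (c a b : ℤ) : (Icc a b).image (c - ·) = Icc (c - b) (c - a) := by
  ext t
  simp only [mem_image, mem_Icc]
  exact ⟨fun ⟨u, hu, hut⟩ => by omega, fun ht => ⟨c - t, by omega, by omega⟩⟩

theorem stmt2_general (A B : Finset ℤ) (M N : ℤ)
    (x : ℤ) (hxAB : x + M ∉ A + B) :
    N - x + 1 ≤ ((Finset.Icc (x + M - N) M \ A).card : ℤ)
      + ((Finset.Icc x N \ B).card : ℤ) := by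
  have hcard := card_le_card_sdiff_add_card_image_sub_sdiff hxAB (Icc x N)
  rw [Int.image_const_sub_Icc, add_sub_cancel_left, Int.card_Icc] at hcard
  omega

theorem stmt2 (A B : Finset ℤ) (hA : A.Nonempty) (hB : B.Nonempty) (M N : ℤ)
    (hminA : A.min' hA = 0) (hminB : B.min' hB = 0)
    (hmaxA : A.max' hA = M) (hmaxB : B.max' hB = N) (hMN : N ≤ M)
    (x : ℤ) (hx : x ∈ Finset.Icc 0 N) (hxAB : x + M ∉ A + B) :
    N - x + 1 ≤ ((Finset.Icc (x + M - N) M \ A).card : ℤ)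
      + ((Finset.Icc x N \ B).card : ℤ) :=
  stmt2_general A B M N x hxAB
end

section
/- Let A, B be finite nonempty sets of integers with min A = min B = 0, max A = M, max B = N, M ≥ N, and suppose h_A = |[0,M] \ A| ≤ |B| - 2. Then for every x ∈ [1, N] with x ∉ B, either x ∈ A + B or x + M ∈ A + B. -/
/-!
If neither `x` nor `x + M` lies in `A + B`, then every `b ∈ B` gives a hole of `A`: `x - b` when
`b < x`, and `x + M - b` when `b ≥ x`. For nonzero `b ∈ [0, M]` the first kind lands in `[1, x - 1]`
and the second in `[x, M]`, so distinct nonzero elements of `B` give distinct holes in `[0, M]`.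
Hence `h_A ≥ |B| - 1`.
-/

open scoped Pointwise

open Finset

lemma sub_notMem_of_notMem_add {A B : Finset ℤ} {y b : ℤ} (hy : y ∉ A + B) (hb : b ∈ B) :
    y - b ∉ A :=
  fun ha => hy (by simpa using add_mem_add ha hb)

lemma card_le_card_holes_of_notMem_add {A B : Finset ℤ} {M x : ℤ} (hB : B ⊆ Ioc 0 M)
    (hx : x ∈ Icc 0 M) (hx₁ : x ∉ A + B) (hx₂ : x + M ∉ A + B) :
    #B ≤ #(Icc 0 M \ A) := by
  rw [mem_Icc] at hx
  let f : ℤ → ℤ := fun b => if b < x then x - b else x + M - b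
  have hmaps : Set.MapsTo f B ↑(Icc 0 M \ A) := by
    intro b hb
    have hbM := mem_Ioc.mp (hB hb)
    simp only [f, mem_coe, mem_sdiff, mem_Icc]
    split_ifs with hbx
    · exact ⟨by omega, sub_notMem_of_notMem_add hx₁ hb⟩
    · exact ⟨by omega, sub_notMem_of_notMem_add hx₂ hb⟩
  have hinj : Set.InjOn f B := by
    intro b hb b' hb' hfb
    have hbM := mem_Ioc.mp (hB hb)
    have hbM' := mem_Ioc.mp (hB hb')
    simp only [f] at hfb
    split_ifs at hfb <;> omega
  exact card_le_card_of_injOn f hmaps hinj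

theorem stmt3_general (A B : Finset ℤ) (hB : B.Nonempty) (M N : ℤ)
    (hminB : B.min' hB = 0)
    (hmaxB : B.max' hB = N) (hMN : N ≤ M)
    (hhole : ((Finset.Icc 0 M \ A).card : ℤ) ≤ (B.card : ℤ) - 2) :
    ∀ x ∈ Finset.Icc 1 N, x ∉ B → x ∈ A + B ∨ x + M ∈ A + B := by
  intro x hx _
  rw [mem_Icc] at hx
  by_contra! hcon
  have hB₀ : B.erase 0 ⊆ Ioc 0 M := by
    intro b hb
    obtain ⟨hb0, hbB⟩ := mem_erase.mp hb
    have := hminB ▸ B.min'_le b hbB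
    have := hmaxB ▸ B.le_max' b hbB
    exact mem_Ioc.mpr ⟨by omega, by omega⟩
  have hsub : A + B.erase 0 ⊆ A + B := add_subset_add_left (erase_subset 0 B)
  have hcard := card_le_card_holes_of_notMem_add hB₀ (mem_Icc.mpr ⟨by omega, by omega⟩)
    (fun h => hcon.1 (hsub h)) (fun h => hcon.2 (hsub h))
  rw [card_erase_of_mem (hminB ▸ B.min'_mem hB)] at hcard
  have := card_pos.mpr hB
  omega

theorem stmt3 (A B : Finset ℤ) (hA : A.Nonempty) (hB : B.Nonempty) (M N : ℤ)
    (hminA : A.min' hA = 0) (hminB : B.min' hB = 0)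
    (hmaxA : A.max' hA = M) (hmaxB : B.max' hB = N) (hMN : N ≤ M)
    (hhole : ((Finset.Icc 0 M \ A).card : ℤ) ≤ (B.card : ℤ) - 2) :
    ∀ x ∈ Finset.Icc 1 N, x ∉ B → x ∈ A + B ∨ x + M ∈ A + B :=
  stmt3_general A B hB M N hminB hmaxB hMN hhole
end

section
/- Let A, B be finite nonempty sets of integers with min A = min B = 0, max A = M, max B = N, M ≥ N, and suppose h_A = |[0,M] \ A| ≤ |B| - 2. Then for every x ∈ [0, M] with x ∉ A, either x ∈ A + B or x + N ∈ A + B. -/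
/-!
Suppose `x ∉ A + B` and `x + N ∉ A + B`. For each `b ∈ B`, the integer `x - b` (if `b ≤ x`) or
`x + N - b` (if `b > x`) lies in `[0, M]` and cannot belong to `A`, so it is a hole of `A`.
This assignment is injective on `B \ {0}`: a collision `x - b₁ = x + N - b₂` forces `b₂ - b₁ = N`,
i.e. `b₁ = 0`. Hence `|B| - 1 ≤ h_A`, contradicting `h_A ≤ |B| - 2`.
-/

open scoped Pointwise

def partner (x N b : ℤ) : ℤ := if b ≤ x then x - b else x + N - b

lemma partner_add_eq (x N b : ℤ) : partner x N b + b = x ∨ partner x N b + b = x + N := by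
  unfold partner
  split_ifs <;> omega

lemma partner_mem_Icc {x N M b : ℤ} (hx : x ∈ Set.Icc 0 M) (hNM : N ≤ M) (hb : b ∈ Set.Icc 0 N) :
    partner x N b ∈ Set.Icc 0 M := by
  obtain ⟨hx0, hxM⟩ := hx
  obtain ⟨hb0, hbN⟩ := hb
  unfold partner
  constructor <;> split_ifs <;> omega

lemma partner_injOn (x N : ℤ) : Set.InjOn (partner x N) (Set.Ioc 0 N) := by
  rintro b₁ ⟨hb₁0, hb₁N⟩ b₂ ⟨hb₂0, hb₂N⟩ h
  unfold partner at h
  split_ifs at h <;> omega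

lemma partner_notMem {A B : Finset ℤ} {x N b : ℤ} (hx : x ∉ A + B) (hxN : x + N ∉ A + B)
    (hb : b ∈ B) : partner x N b ∉ A := by
  intro ha
  have hmem := Finset.add_mem_add ha hb
  rcases partner_add_eq x N b with h | h <;> rw [h] at hmem
  exacts [hx hmem, hxN hmem]

lemma card_erase_zero_le_card_holes {A B : Finset ℤ} {x M N : ℤ} (hB : ↑B ⊆ Set.Icc 0 N)
    (hNM : N ≤ M) (hx : x ∈ Set.Icc 0 M) (hxAB : x ∉ A + B) (hxNAB : x + N ∉ A + B) :
    (B.erase 0).card ≤ (Finset.Icc 0 M \ A).card := by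
  have hB' : ↑(B.erase 0) ⊆ Set.Ioc 0 N := fun b hb => by
    obtain ⟨hb0, hbB⟩ := Finset.mem_erase.mp hb
    obtain ⟨hb0', hbN⟩ := hB hbB
    exact ⟨lt_of_le_of_ne hb0' (Ne.symm hb0), hbN⟩
  refine Finset.card_le_card_of_injOn (partner x N) (fun b hb => ?_) ((partner_injOn x N).mono hB')
  have hbB := Finset.mem_of_mem_erase hb
  rw [Finset.coe_sdiff, Finset.coe_Icc]
  exact ⟨partner_mem_Icc hx hNM (hB hbB), partner_notMem hxAB hxNAB hbB⟩

theorem stmt4_general (A B : Finset ℤ) (hB : B.Nonempty) (M N : ℤ)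
    (hminB : B.min' hB = 0)
    (hmaxB : B.max' hB = N) (hMN : N ≤ M)
    (hhole : ((Finset.Icc 0 M \ A).card : ℤ) ≤ (B.card : ℤ) - 2) :
    ∀ x ∈ Finset.Icc 0 M, x ∉ A → x ∈ A + B ∨ x + N ∈ A + B := by
  intro x hx _
  by_contra! hxAB
  have hBIcc : ↑B ⊆ Set.Icc 0 N := fun b hb =>
    ⟨hminB ▸ B.min'_le b hb, hmaxB ▸ B.le_max' b hb⟩
  have h0B : (0 : ℤ) ∈ B := hminB ▸ B.min'_mem hB
  have hle := card_erase_zero_le_card_holes hBIcc hMN (by simpa using hx) hxAB.1 hxAB.2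
  rw [Finset.card_erase_of_mem h0B] at hle
  have hBpos := hB.card_pos
  omega

theorem stmt4 (A B : Finset ℤ) (hA : A.Nonempty) (hB : B.Nonempty) (M N : ℤ)
    (hminA : A.min' hA = 0) (hminB : B.min' hB = 0)
    (hmaxA : A.max' hA = M) (hmaxB : B.max' hB = N) (hMN : N ≤ M)
    (hhole : ((Finset.Icc 0 M \ A).card : ℤ) ≤ (B.card : ℤ) - 2) :
    ∀ x ∈ Finset.Icc 0 M, x ∉ A → x ∈ A + B ∨ x + N ∈ A + B :=
  stmt4_general A B hB M N hminB hmaxB hMN hhole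
end

section
/- Let A, B be finite nonempty sets of integers with min A = min B = 0, max A = M, max B = N, M ≥ N, |A+B| = |A| + |B| - 1 + r, and h_A = |[0,M] \ A| ≤ |B| - 2. Define a hole x ∈ [0,N-1] \ B to be left stable if x ∉ A + B, and a hole x ∈ [1,N] \ B to be right stable if x + M ∉ A + B. Then the number of holes of B in [0,N] that are neither left nor right stable equals r - h_A, where h_A = |[0,M]\A|. -/
/-!
Every hole `y` of `A + B` turns the elements `b ∈ B` with `y - b ∈ [0, M]` into holes `y - b` of
`A`. Since `A` has at most `|B| - 2` holes, this forces `[N, M] ⊆ A + B`, and it forbids a hole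
`x < N` of `B` to be both left and right stable: the elements `b ≤ x` of `B` are sent to `x - b`
and those with `x < b < N` to `x + M - b`, giving `|B| - 1` distinct holes of `A`. Hence the holes
of `A + B` in `[0, M + N]` are exactly the left stable holes and the right stable holes shifted by
`M`, and comparing `|A + B| = M + N + 1 - h_{A+B}` with `|A| = M + 1 - h_A`, `|B| = N + 1 - h_B`
gives `r = h_A + h_B - (#left stable + #right stable) = h_A + h_B^u`.
-/

open scoped Pointwise
open scoped Classical

open Finset

noncomputable def leftStableHoles (A B : Finset ℤ) (N : ℤ) : Finset ℤ :=
  (Icc 0 (N - 1)).filter (· ∉ A + B)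

noncomputable def rightStableHoles (A B : Finset ℤ) (M N : ℤ) : Finset ℤ :=
  (Icc 1 N).filter (fun x => x + M ∉ A + B)

lemma subset_Icc_min'_max' {s : Finset ℤ} (hs : s.Nonempty) : s ⊆ Icc (s.min' hs) (s.max' hs) :=
  fun _ hx => mem_Icc.2 ⟨min'_le s _ hx, le_max' s _ hx⟩

lemma card_Icc_sdiff_of_subset {X : Finset ℤ} {a : ℤ} (ha : 0 ≤ a) (hX : X ⊆ Icc 0 a) :
    ((Icc 0 a \ X).card : ℤ) = a + 1 - X.card := by
  rw [card_sdiff_of_subset hX, Nat.cast_sub (card_le_card hX), Int.card_Icc]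
  omega

section Holes

variable {A B : Finset ℤ} {M N : ℤ}

lemma card_le_card_holes {s : Finset ℤ} (f : ℤ → ℤ) (hs : s ⊆ B)
    (hf : ∀ b ∈ s, f b ∈ Icc 0 M ∧ f b + b ∉ A + B) (hinj : Set.InjOn f s) :
    s.card ≤ (Icc 0 M \ A).card := by
  refine card_le_card_of_injOn f (fun b hb => ?_) hinj
  obtain ⟨hfb, hhole⟩ := hf b hb
  exact mem_sdiff.2 ⟨hfb, fun hA => hhole (add_mem_add hA (hs hb))⟩

lemma Icc_subset_add_of_card_holes_lt (hB : B ⊆ Icc 0 N) (hcard : (Icc 0 M \ A).card < B.card) :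
    Icc N M ⊆ A + B := by
  intro y hy
  by_contra hyAB
  refine hcard.not_ge (card_le_card_holes (fun b => y - b) subset_rfl (fun b hb => ?_) ?_)
  · have := mem_Icc.1 (hB hb)
    have := mem_Icc.1 hy
    exact ⟨mem_Icc.2 ⟨by omega, by omega⟩, by simpa using hyAB⟩
  · exact fun b _ c _ h => by simpa using h

lemma add_mem_add_of_notMem_add (hB : B ⊆ Icc 0 N) (hNB : N ∈ B) (hNM : N ≤ M)
    (hcard : (Icc 0 M \ A).card + 1 < B.card) {x : ℤ} (hx0 : 0 ≤ x) (hxM : x ≤ M)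
    (hx : x ∉ A + B) : x + M ∈ A + B := by
  by_contra hxMAB
  let f : ℤ → ℤ := fun b => if b ≤ x then x - b else x + M - b
  have hmaps : ∀ b ∈ B.erase N, f b ∈ Icc 0 M ∧ f b + b ∉ A + B := by
    intro b hb
    have := mem_Icc.1 (hB (mem_of_mem_erase hb))
    by_cases hbx : b ≤ x
    · simp only [f, if_pos hbx, sub_add_cancel, mem_Icc]
      exact ⟨⟨by omega, by omega⟩, hx⟩
    · simp only [f, if_neg hbx, sub_add_cancel, mem_Icc]
      exact ⟨⟨by omega, by omega⟩, hxMAB⟩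
  -- The branches of `f` take values in the disjoint ranges `[0, x]` and `[x + M - N + 1, M - 1]`.
  have hinj : Set.InjOn f (B.erase N) := by
    intro b hb c hc h
    have := ne_of_mem_erase hb
    have := ne_of_mem_erase hc
    have := mem_Icc.1 (hB (mem_of_mem_erase hb))
    have := mem_Icc.1 (hB (mem_of_mem_erase hc))
    simp only [f] at h
    split_ifs at h <;> omega
  have := card_le_card_holes f (erase_subset N B) hmaps hinj
  have := card_erase_add_one hNB
  omega

lemma leftStableHoles_subset (h0A : 0 ∈ A) :
    leftStableHoles A B N ⊆ Icc 0 N \ B := by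
  intro x hx
  obtain ⟨hxI, hxAB⟩ := mem_filter.1 hx
  have := mem_Icc.1 hxI
  refine mem_sdiff.2 ⟨mem_Icc.2 ⟨by omega, by omega⟩, fun hxB => hxAB ?_⟩
  simpa using add_mem_add h0A hxB

lemma rightStableHoles_subset (hMA : M ∈ A) :
    rightStableHoles A B M N ⊆ Icc 0 N \ B := by
  intro x hx
  obtain ⟨hxI, hxAB⟩ := mem_filter.1 hx
  have := mem_Icc.1 hxI
  refine mem_sdiff.2 ⟨mem_Icc.2 ⟨by omega, by omega⟩, fun hxB => hxAB ?_⟩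
  simpa [add_comm] using add_mem_add hMA hxB

lemma disjoint_leftStableHoles_rightStableHoles (hB : B ⊆ Icc 0 N) (hNB : N ∈ B) (hNM : N ≤ M)
    (hcard : (Icc 0 M \ A).card + 1 < B.card) :
    Disjoint (leftStableHoles A B N) (rightStableHoles A B M N) := by
  refine disjoint_left.2 fun x hxL hxR => (mem_filter.1 hxR).2 ?_
  obtain ⟨hxI, hxAB⟩ := mem_filter.1 hxL
  have := mem_Icc.1 hxI
  exact add_mem_add_of_notMem_add hB hNB hNM hcard (by omega) (by omega) hxAB

lemma Icc_sdiff_add_eq (hN0 : 0 ≤ N) (hNM : N ≤ M) (hmid : Icc N M ⊆ A + B) :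
    Icc 0 (M + N) \ (A + B) =
      leftStableHoles A B N ∪ (rightStableHoles A B M N).map (addRightEmbedding M) := by
  ext t
  simp only [leftStableHoles, rightStableHoles, mem_sdiff, mem_union, mem_filter, mem_map,
    addRightEmbedding_apply, mem_Icc]
  constructor
  · rintro ⟨ht, htAB⟩
    by_cases htN : t ≤ N - 1
    · exact Or.inl ⟨⟨ht.1, htN⟩, htAB⟩
    · have htM : M < t := by
        by_contra! htM
        exact htAB (hmid (mem_Icc.2 ⟨by omega, htM⟩))
      exact Or.inr ⟨t - M, ⟨⟨by omega, by omega⟩, by simpa using htAB⟩, by ring⟩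
  · rintro (⟨ht, htAB⟩ | ⟨y, ⟨hy, hyAB⟩, rfl⟩)
    · exact ⟨⟨ht.1, by omega⟩, htAB⟩
    · exact ⟨⟨by omega, by omega⟩, hyAB⟩

lemma card_Icc_sdiff_add_eq (hN0 : 0 ≤ N) (hNM : N ≤ M) (hmid : Icc N M ⊆ A + B) :
    (Icc 0 (M + N) \ (A + B)).card =
      (leftStableHoles A B N).card + (rightStableHoles A B M N).card := by
  rw [Icc_sdiff_add_eq hN0 hNM hmid, card_union_of_disjoint, card_map]
  refine disjoint_left.2 fun t htL htR => ?_
  obtain ⟨y, hy, rfl⟩ := mem_map.1 htR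
  have := mem_Icc.1 (mem_filter.1 htL).1
  have := mem_Icc.1 (mem_filter.1 hy).1
  simp only [addRightEmbedding_apply] at *
  omega

end Holes

theorem stmt6 (A B : Finset ℤ) (hA : A.Nonempty) (hB : B.Nonempty) (M N r : ℤ)
    (hminA : A.min' hA = 0) (hminB : B.min' hB = 0)
    (hmaxA : A.max' hA = M) (hmaxB : B.max' hB = N) (hMN : N ≤ M)
    (hr : ((A + B).card : ℤ) = (A.card : ℤ) + (B.card : ℤ) - 1 + r)
    (hhole : ((Finset.Icc 0 M \ A).card : ℤ) ≤ (B.card : ℤ) - 2) :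
    (((Finset.Icc 0 N \ B).filter (fun x =>
        ¬(x ∈ Finset.Icc 0 (N - 1) ∧ x ∉ A + B) ∧
        ¬(x ∈ Finset.Icc 1 N ∧ x + M ∉ A + B))).card : ℤ)
      = r - ((Finset.Icc 0 M \ A).card : ℤ) := by
  have h0A : 0 ∈ A := hminA ▸ A.min'_mem hA
  have hMA : M ∈ A := hmaxA ▸ A.max'_mem hA
  have hNB : N ∈ B := hmaxB ▸ B.max'_mem hB
  have hAsub : A ⊆ Icc 0 M := hminA ▸ hmaxA ▸ subset_Icc_min'_max' hA
  have hBsub : B ⊆ Icc 0 N := hminB ▸ hmaxB ▸ subset_Icc_min'_max' hB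
  have hN0 : 0 ≤ N := (mem_Icc.1 (hBsub hNB)).1
  have hABsub : A + B ⊆ Icc 0 (M + N) := by
    simpa using (add_subset_add hAsub hBsub).trans (Icc_add_Icc_subset 0 M 0 N)
  have hcard : (Icc 0 M \ A).card + 1 < B.card := by omega
  have hmid := Icc_subset_add_of_card_holes_lt hBsub ((lt_add_one _).trans hcard)
  have hstable := union_subset (leftStableHoles_subset (B := B) (N := N) h0A)
    (rightStableHoles_subset (B := B) (N := N) hMA)
  have hunstable : (Icc 0 N \ B).filter (fun x =>
      ¬(x ∈ Icc 0 (N - 1) ∧ x ∉ A + B) ∧ ¬(x ∈ Icc 1 N ∧ x + M ∉ A + B)) =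
      (Icc 0 N \ B) \ (leftStableHoles A B N ∪ rightStableHoles A B M N) := by
    ext x
    simp [leftStableHoles, rightStableHoles]
  rw [hunstable, card_sdiff_of_subset hstable, Nat.cast_sub (card_le_card hstable),
    card_union_of_disjoint (disjoint_leftStableHoles_rightStableHoles hBsub hNB hMN hcard)]
  have := card_Icc_sdiff_add_eq hN0 hMN hmid
  have := card_Icc_sdiff_of_subset hN0 hBsub
  have := card_Icc_sdiff_of_subset (hN0.trans hMN) hAsub
  have := card_Icc_sdiff_of_subset (by omega) hABsub
  push_cast
  omega
end

section
/- Let A, B be finite nonempty sets of integers with min A = min B = 0, max A = M, max B = N, M ≥ N, |A+B| = |A|+|B|-1+r, h_A = |[0,M]\A| ≤ |B|-2, and r ≤ |B|-2-δ(A,B). Let e be the greatest element of [0,N-1]\B with e ∉ A+B (set e = -1 if none exists), and let c be the smallest element of [1,N]\B with c + M ∉ A+B (set c = N+1 if none exists). Then the interval [e+1, M+c-1] is contained in A+B. -/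
open scoped Pointwise
open scoped Classical

/-!
Take `x ∈ [e+1, M+c-1]` outside `A + B`. If `x < N`, then `x ∉ B` because `0 ∈ A`, so `x ≤ e`
by maximality of `e`; if `x > M`, then `x - M ∉ B` because `M ∈ A`, so `c ≤ x - M` by minimality
of `c`. Otherwise `N ≤ x ≤ M`, and `b ↦ x - b` embeds `B` into the holes `[0,M] \ A`, contradicting
`h_A ≤ |B| - 2`.
-/

namespace Finset

variable {G : Type*} [AddCommGroup G] [DecidableEq G] {A B : Finset G} {x a : G}

theorem sub_notMem_of_notMem_add (hx : x ∉ A + B) (ha : a ∈ A) : x - a ∉ B :=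
  fun hb => hx (by simpa using add_mem_add ha hb)

theorem card_le_card_sdiff_of_notMem_add {S : Finset G} (hx : x ∉ A + B)
    (hS : ∀ b ∈ B, x - b ∈ S) : #B ≤ #(S \ A) := by
  refine card_le_card_of_injOn (x - ·) (fun b hb => mem_sdiff.2 ⟨hS b hb, fun ha => ?_⟩)
    (fun b _ b' _ h => sub_right_injective h)
  exact sub_notMem_of_notMem_add hx ha (by simpa using hb)

end Finset

open Finset

theorem stmt9_general (A B : Finset ℤ) (hA : A.Nonempty) (hB : B.Nonempty) (M N e c : ℤ)
    (hminA : A.min' hA = 0) (hminB : B.min' hB = 0)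
    (hmaxA : A.max' hA = M) (hmaxB : B.max' hB = N)
    (hhole : ((Finset.Icc 0 M \ A).card : ℤ) ≤ (B.card : ℤ) - 2)
    (he : IsGreatest (insert (-1 : ℤ)
      {x : ℤ | x ∈ Finset.Icc 0 (N - 1) ∧ x ∉ B ∧ x ∉ A + B}) e)
    (hc : IsLeast (insert (N + 1 : ℤ)
      {x : ℤ | x ∈ Finset.Icc 1 N ∧ x ∉ B ∧ x + M ∉ A + B}) c) :
    Finset.Icc (e + 1) (M + c - 1) ⊆ A + B := by
  intro x hx
  rw [mem_Icc] at hx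
  by_contra hxAB
  have h0A : (0 : ℤ) ∈ A := hminA ▸ A.min'_mem hA
  have hMA : M ∈ A := hmaxA ▸ A.max'_mem hA
  have hem : -1 ≤ e := he.2 (Set.mem_insert _ _)
  have hcN : c ≤ N + 1 := hc.2 (Set.mem_insert _ _)
  rcases lt_or_ge x N with hxN | hNx
  · have hxB : x ∉ B := by simpa using sub_notMem_of_notMem_add hxAB h0A
    have : x ≤ e := he.2 (Set.mem_insert_of_mem _ ⟨mem_Icc.2 ⟨by omega, by omega⟩, hxB, hxAB⟩)
    omega
  rcases lt_or_ge M x with hMx | hxM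
  · have : c ≤ x - M := hc.2 (Set.mem_insert_of_mem _
      ⟨mem_Icc.2 ⟨by omega, by omega⟩, sub_notMem_of_notMem_add hxAB hMA, by simpa using hxAB⟩)
    omega
  have hBholes : #B ≤ #(Icc 0 M \ A) := card_le_card_sdiff_of_notMem_add hxAB fun b hb => by
    have := hminB ▸ B.min'_le b hb
    have := hmaxB ▸ B.le_max' b hb
    exact mem_Icc.2 ⟨by omega, by omega⟩
  omega

theorem stmt9 (A B : Finset ℤ) (hA : A.Nonempty) (hB : B.Nonempty) (M N r e c : ℤ)
    (hminA : A.min' hA = 0) (hminB : B.min' hB = 0)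
    (hmaxA : A.max' hA = M) (hmaxB : B.max' hB = N) (hMN : N ≤ M)
    (hr : ((A + B).card : ℤ) = (A.card : ℤ) + (B.card : ℤ) - 1 + r)
    (hhole : ((Finset.Icc 0 M \ A).card : ℤ) ≤ (B.card : ℤ) - 2)
    (hrb : r ≤ (B.card : ℤ) - 2 - (if A ⊆ B then 1 else 0))
    (he : IsGreatest (insert (-1 : ℤ)
      {x : ℤ | x ∈ Finset.Icc 0 (N - 1) ∧ x ∉ B ∧ x ∉ A + B}) e)
    (hc : IsLeast (insert (N + 1 : ℤ)
      {x : ℤ | x ∈ Finset.Icc 1 N ∧ x ∉ B ∧ x + M ∉ A + B}) c) :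
    Finset.Icc (e + 1) (M + c - 1) ⊆ A + B :=
  stmt9_general A B hA hB M N e c hminA hminB hmaxA hmaxB hhole he hc
end

section
/- Let A, B be finite nonempty sets of integers with diam B ≤ diam A ≤ |A| + |B| - 3 and |A+B| ≤ |A| + 2|B| - 3 - δ(A,B), where δ(A,B) = 1 if some translate of A is contained in B and 0 otherwise. Then A + B contains an arithmetic progression with difference 1 (i.e., an interval of consecutive integers) of length |A| + |B| - 1. -/
open scoped Pointwise
open scoped Classical
open Finset

/-!
After translating, `A ⊆ [0, l]` and `B ⊆ [0, m]` with `0, l ∈ A`, `0, m ∈ B` and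
`m ≤ l ≤ |A| + |B| - 3`; write `S = A + B`. Pigeonhole applied to the elements of `A` and `B`
below (or above) a point shows that `[m, l] ⊆ S` and that each `c ∈ [0, m]` has `c ∈ S` or
`c + l ∈ S`. Hence `|S| ≥ l + |G|` for every `G ⊆ [0, m]` of points `c` with both `c ∈ S` and
`c + l ∈ S`; such a `G` may contain `B`, and also `A` when `l = m`.

Let `[p + 1, q + l - 1]` be the maximal interval of `S` containing `[m, l]`. If it is shorter than
`|A| + |B| - 1`, the excess `E(x) = |A ∩ (-∞, x]| + |B ∩ (-∞, x]| - (x + 1)` is `≤ 0` at the gap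
`p` and `≥ |A| + |B| - l - 1` at `q - 1 ≤ p`. Since `E` drops by at most one per step, and only
outside `A ∪ B`, the first drops to the levels `1, …, |A| + |B| - l - 2` (one level fewer when
`l = m`) give that many points of `G` outside `A ∪ B`, and `|S| ≥ |A| + 2|B| - 2 - δ(A, B)`.
-/

def countLE (X : Finset ℤ) (x : ℤ) : ℕ := #{t ∈ X | t ≤ x}

section countLE

variable (X : Finset ℤ)

lemma countLE_add_card_filter_lt (x : ℤ) : countLE X x + #{t ∈ X | x < t} = #X := by
  simpa only [countLE, not_le] using card_filter_add_card_filter_not (s := X) (· ≤ x)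

lemma countLE_le_add {x y : ℤ} (h : x ≤ y) : (countLE X y : ℤ) ≤ countLE X x + (y - x) := by
  have hsub : {t ∈ X | t ≤ y} ⊆ {t ∈ X | t ≤ x} ∪ Ioc x y := by
    intro t ht
    rw [mem_filter] at ht
    rw [mem_union, mem_filter, mem_Ioc]
    by_cases htx : t ≤ x
    · exact Or.inl ⟨ht.1, htx⟩
    · exact Or.inr ⟨not_le.1 htx, ht.2⟩
  have := (card_le_card hsub).trans (card_union_le _ _)
  rw [Int.card_Ioc] at this
  unfold countLE
  omega

lemma countLE_eq_countLE_sub_one_add (x : ℤ) :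
    countLE X x = countLE X (x - 1) + if x ∈ X then 1 else 0 := by
  have hsplit : {t ∈ X | t ≤ x} = {t ∈ X | t ≤ x - 1} ∪ {t ∈ X | t = x} := by
    rw [← filter_or]
    exact filter_congr fun t _ => by omega
  have hdisj : Disjoint {t ∈ X | t ≤ x - 1} {t ∈ X | t = x} :=
    disjoint_filter.2 fun t _ h => by omega
  rw [countLE, hsplit, card_union_of_disjoint hdisj, filter_eq']
  split_ifs <;> rfl

end countLE

lemma mem_add_of_card_Icc_lt {A B : Finset ℤ} {c lo hi : ℤ} (hA : A ⊆ Icc lo hi)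
    (hB : B ⊆ Icc (c - hi) (c - lo)) (hcard : #(Icc lo hi) < #A + #B) : c ∈ A + B := by
  have hB' : B.image (c - ·) ⊆ Icc lo hi := by
    intro z hz
    obtain ⟨t, ht, rfl⟩ := mem_image.1 hz
    have := mem_Icc.1 (hB ht)
    exact mem_Icc.2 ⟨by omega, by omega⟩
  rw [← card_image_of_injective B sub_right_injective] at hcard
  obtain ⟨z, hz⟩ := inter_nonempty_of_card_lt_card_add_card hA hB' hcard
  obtain ⟨hzA, hzB⟩ := mem_inter.1 hz
  obtain ⟨t, ht, rfl⟩ := mem_image.1 hzB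
  exact mem_add.2 ⟨c - t, hzA, t, ht, sub_add_cancel c t⟩

lemma exists_drop_of_lt_of_le {f : ℤ → ℤ} (hf : ∀ x, f (x - 1) ≤ f x + 1) {x₀ x₁ i : ℤ}
    (hx : x₀ ≤ x₁) (h₀ : i < f x₀) (h₁ : f x₁ ≤ i) :
    ∃ x ∈ Ioc x₀ x₁, f x = i ∧ f x < f (x - 1) := by
  induction x₁, hx using Int.leInduction with
  | base => omega
  | succ n hn ih =>
    by_cases hn' : f n ≤ i
    · obtain ⟨x, hx, hfx⟩ := ih hn'
      exact ⟨x, Ioc_subset_Ioc_right (by omega) hx, hfx⟩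
    · have := hf (n + 1)
      rw [add_sub_cancel_right] at this
      exact ⟨n + 1, mem_Ioc.2 ⟨by omega, le_rfl⟩, by omega, by rw [add_sub_cancel_right]; omega⟩

lemma card_Icc_le_card_filter_drop {f : ℤ → ℤ} (hf : ∀ x, f (x - 1) ≤ f x + 1)
    {x₀ x₁ lo hi : ℤ} (hx : x₀ ≤ x₁) (h₀ : hi < f x₀) (h₁ : f x₁ ≤ lo) :
    #(Icc lo hi) ≤ #{x ∈ Ioc x₀ x₁ | f x < f (x - 1) ∧ f x ∈ Icc lo hi} := by
  refine (card_le_card fun i hi' => ?_).trans (card_image_le (f := f))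
  rw [mem_Icc] at hi'
  obtain ⟨x, hx, hfx, hdrop⟩ := exists_drop_of_lt_of_le hf hx (i := i) (by omega) (by omega)
  exact mem_image.2 ⟨x, mem_filter.2 ⟨hx, hdrop, by rw [hfx]; exact mem_Icc.2 hi'⟩, hfx⟩

def excess (A B : Finset ℤ) (x : ℤ) : ℤ := countLE A x + countLE B x - (x + 1)

section excess

variable {A B : Finset ℤ}

lemma excess_le_excess_add {x y : ℤ} (h : x ≤ y) : excess A B y ≤ excess A B x + (y - x) := by
  have := countLE_le_add A h
  have := countLE_le_add B h
  unfold excess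
  omega

lemma excess_sub_one_le (x : ℤ) : excess A B (x - 1) ≤ excess A B x + 1 := by
  have hA := countLE_eq_countLE_sub_one_add A x
  have hB := countLE_eq_countLE_sub_one_add B x
  unfold excess
  split_ifs at hA hB <;> omega

lemma notMem_of_excess_lt {x : ℤ} (h : excess A B x < excess A B (x - 1)) : x ∉ A ∧ x ∉ B := by
  have hA := countLE_eq_countLE_sub_one_add A x
  have hB := countLE_eq_countLE_sub_one_add B x
  unfold excess at h
  split_ifs at hA hB <;> first | exact ⟨‹_›, ‹_›⟩ | (exfalso; omega)

lemma mem_add_of_excess_pos (hA : ∀ t ∈ A, 0 ≤ t) (hB : ∀ t ∈ B, 0 ≤ t) {c : ℤ} (hc : -1 ≤ c)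
    (h : 0 < excess A B c) : c ∈ A + B := by
  refine add_subset_add (filter_subset (· ≤ c) A) (filter_subset (· ≤ c) B) ?_
  refine mem_add_of_card_Icc_lt (lo := 0) (hi := c) ?_ ?_ ?_
  · intro t ht
    rw [mem_filter] at ht
    exact mem_Icc.2 ⟨hA t ht.1, ht.2⟩
  · intro t ht
    rw [mem_filter] at ht
    exact mem_Icc.2 ⟨by have := hB t ht.1; omega, by omega⟩
  · rw [Int.card_Icc]
    unfold excess countLE at h
    omega

lemma add_mem_add_of_countLE_lt {l m : ℤ} (hA : ∀ t ∈ A, t ≤ l) (hB : ∀ t ∈ B, t ≤ m) {c : ℤ}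
    (hc : c ≤ m + 1)
    (h : countLE A (c + (l - m) - 1) + countLE B (c - 1) + (m + 1 - c) < (#A + #B : ℤ)) :
    c + l ∈ A + B := by
  refine add_subset_add (filter_subset (c + (l - m) - 1 < ·) A) (filter_subset (c - 1 < ·) B) ?_
  refine mem_add_of_card_Icc_lt (lo := c + (l - m)) (hi := l) ?_ ?_ ?_
  · intro t ht
    rw [mem_filter] at ht
    exact mem_Icc.2 ⟨by omega, hA t ht.1⟩
  · intro t ht
    rw [mem_filter] at ht
    exact mem_Icc.2 ⟨by omega, by have := hB t ht.1; omega⟩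
  · have := countLE_add_card_filter_lt A (c + (l - m) - 1)
    have := countLE_add_card_filter_lt B (c - 1)
    rw [Int.card_Icc]
    omega

lemma Icc_subset_add {l m : ℤ} (hA : A ⊆ Icc 0 l) (hB : B ⊆ Icc 0 m) (hm : 0 ≤ m)
    (hl : l + 2 ≤ (#A + #B : ℤ)) : Icc m l ⊆ A + B := by
  intro c hc
  rw [mem_Icc] at hc
  refine mem_add_of_card_Icc_lt hA (fun t ht => ?_) ?_
  · have := mem_Icc.1 (hB ht)
    exact mem_Icc.2 ⟨by omega, by omega⟩
  · rw [Int.card_Icc]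
    omega

lemma le_excess_sub_one_of_add_notMem {l m : ℤ} (hA : ∀ t ∈ A, t ≤ l) (hB : ∀ t ∈ B, t ≤ m)
    (hml : m ≤ l) {c : ℤ} (hc : c ≤ m + 1) (h : c + l ∉ A + B) :
    #A + #B - l - 1 ≤ excess A B (c - 1) := by
  have := countLE_le_add A (show c - 1 ≤ c + (l - m) - 1 by omega)
  have := mt (add_mem_add_of_countLE_lt hA hB hc) h
  unfold excess
  omega

lemma add_mem_add_of_excess_le {l m : ℤ} (hA : ∀ t ∈ A, t ≤ l) (hB : ∀ t ∈ B, t ≤ m)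
    (hml : m ≤ l) {c : ℤ} (hc : c ≤ m + 1) (hcA : c ∉ A) (hcB : c ∉ B)
    (h : excess A B c + (if m = l then 1 else 0) ≤ #A + #B - l - 2) : c + l ∈ A + B := by
  refine add_mem_add_of_countLE_lt hA hB hc ?_
  have hB' := countLE_eq_countLE_sub_one_add B c
  rw [if_neg hcB] at hB'
  unfold excess at h
  rcases hml.lt_or_eq with hlt | rfl
  · have := countLE_le_add A (show c ≤ c + (l - m) - 1 by omega)
    rw [if_neg hlt.ne] at h
    omega
  · have hA' := countLE_eq_countLE_sub_one_add A c
    rw [if_neg hcA] at hA'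
    rw [if_pos rfl] at h
    simp only [sub_self, add_zero]
    omega

lemma mem_add_or_add_mem_add {l m : ℤ} (hA : A ⊆ Icc 0 l) (hB : B ⊆ Icc 0 m) (hml : m ≤ l)
    (hl : l + 3 ≤ (#A + #B : ℤ)) {c : ℤ} (hc : c ∈ Icc 0 m) : c ∈ A + B ∨ c + l ∈ A + B := by
  rw [mem_Icc] at hc
  by_contra! h
  have h₁ := mt (mem_add_of_excess_pos (fun t ht => (mem_Icc.1 (hA ht)).1)
    (fun t ht => (mem_Icc.1 (hB ht)).1) (by omega)) h.1
  have h₂ := le_excess_sub_one_of_add_notMem (fun t ht => (mem_Icc.1 (hA ht)).2)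
    (fun t ht => (mem_Icc.1 (hB ht)).2) hml (by omega) h.2
  have := excess_sub_one_le (A := A) (B := B) c
  omega

lemma add_card_le_card_add {l m : ℤ} (hA : A ⊆ Icc 0 l) (hB : B ⊆ Icc 0 m) (hm : 0 ≤ m)
    (hml : m ≤ l) (hl : l + 3 ≤ (#A + #B : ℤ)) {G : Finset ℤ} (hG : G ⊆ Icc 0 m)
    (hGS : ∀ c ∈ G, c ∈ A + B ∧ c + l ∈ A + B) : l + #G ≤ (#(A + B) : ℤ) := by
  set S := A + B
  set U := {c ∈ Icc 0 m | c ∈ S}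
  set V := {c ∈ Icc 0 m | c + l ∈ S}
  have hmid := Icc_subset_add hA hB hm (by omega)
  have hU : #U + (l - m) ≤ (countLE S l : ℤ) := by
    have hsub : U ∪ Ioc m l ⊆ {t ∈ S | t ≤ l} := by
      refine union_subset (fun c hc => ?_) (fun c hc => ?_)
      · rw [mem_filter, mem_Icc] at hc
        exact mem_filter.2 ⟨hc.2, by omega⟩
      · exact mem_filter.2 ⟨hmid (Ioc_subset_Icc_self hc), (mem_Ioc.1 hc).2⟩
    have hdisj : Disjoint U (Ioc m l) := disjoint_left.2 fun c hcU hc => by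
      rw [mem_filter, mem_Icc] at hcU
      rw [mem_Ioc] at hc
      omega
    have := card_le_card hsub
    rw [card_union_of_disjoint hdisj, Int.card_Ioc] at this
    unfold countLE
    omega
  have hlS : countLE S l = countLE S (l - 1) + 1 := by
    rw [countLE_eq_countLE_sub_one_add, if_pos (hmid (mem_Icc.2 ⟨hml, le_rfl⟩))]
  have hV : #V ≤ #{t ∈ S | l - 1 < t} := by
    refine card_le_card_of_injOn (· + l) (fun c hc => ?_) (add_left_injective l).injOn
    rw [mem_coe, mem_filter, mem_Icc] at hc
    exact mem_filter.2 ⟨hc.2, show l - 1 < c + l by omega⟩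
  have hUV : Icc 0 m ⊆ U ∪ V := fun c hc => by
    rcases mem_add_or_add_mem_add hA hB hml hl hc with h | h
    · exact mem_union_left _ (mem_filter.2 ⟨hc, h⟩)
    · exact mem_union_right _ (mem_filter.2 ⟨hc, h⟩)
  have hGUV : G ⊆ U ∩ V := fun c hc =>
    mem_inter.2 ⟨mem_filter.2 ⟨hG hc, (hGS c hc).1⟩, mem_filter.2 ⟨hG hc, (hGS c hc).2⟩⟩
  have := card_union_add_card_inter U V
  have := card_le_card hUV
  have := card_le_card hGUV
  have := countLE_add_card_filter_lt S (l - 1)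
  rw [Int.card_Icc] at *
  omega

lemma exists_maximal_Icc_subset_add {l m : ℤ} (hA : A ⊆ Icc 0 l) (hB : B ⊆ Icc 0 m) (hm : 0 ≤ m)
    (hl : l + 2 ≤ (#A + #B : ℤ)) :
    ∃ p q, -1 ≤ p ∧ p ≤ m ∧ p ∉ A + B ∧ 1 ≤ q ∧ q ≤ m + 1 ∧ q + l ∉ A + B ∧
      Icc (p + 1) (q + l - 1) ⊆ A + B := by
  have hS : A + B ⊆ Icc 0 (l + m) := by
    simpa using (add_subset_add hA hB).trans (Icc_add_Icc_subset 0 l 0 m)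
  have hmid := Icc_subset_add hA hB hm hl
  obtain ⟨p, ⟨hpm, hpS⟩, hpmax⟩ := Int.exists_greatest_of_bdd
    (P := fun x => x ≤ m ∧ x ∉ A + B) ⟨m, fun _ h => h.1⟩
    ⟨-1, by omega, fun h => by have := mem_Icc.1 (hS h); omega⟩
  obtain ⟨q, ⟨hq, hqS⟩, hqmin⟩ := Int.exists_least_of_bdd
    (P := fun x => 1 ≤ x ∧ x + l ∉ A + B) ⟨1, fun _ h => h.1⟩
    ⟨m + 1, by omega, fun h => by have := mem_Icc.1 (hS h); omega⟩
  refine ⟨p, q, hpmax (-1) ⟨by omega, fun h => ?_⟩, hpm, hpS, hq,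
    hqmin (m + 1) ⟨by omega, fun h => ?_⟩, hqS, fun y hy => ?_⟩
  · have := mem_Icc.1 (hS h); omega
  · have := mem_Icc.1 (hS h); omega
  rw [mem_Icc] at hy
  by_contra hyS
  rcases le_or_gt y m with hym | hym
  · have := hpmax y ⟨hym, hyS⟩
    omega
  rcases le_or_gt y l with hyl | hyl
  · exact hyS (hmid (mem_Icc.2 ⟨hym.le, hyl⟩))
  · have := hqmin (y - l) ⟨by omega, by rwa [sub_add_cancel]⟩
    omega

lemma exists_pairs_of_gaps {l m : ℤ} (hA : A ⊆ Icc 0 l) (hB : B ⊆ Icc 0 m) (hml : m ≤ l)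
    {p q : ℤ} (hp : -1 ≤ p) (hpm : p ≤ m) (hpS : p ∉ A + B) (hq : 1 ≤ q) (hqm : q ≤ m + 1)
    (hqS : q + l ∉ A + B) (hshort : q + l - p < #A + #B) :
    ∃ D ⊆ Icc 0 m, Disjoint D (A ∪ B) ∧ (∀ c ∈ D, c ∈ A + B ∧ c + l ∈ A + B) ∧
      #A + #B - l - 2 - (if m = l then 1 else 0) ≤ (#D : ℤ) := by
  have hA₀ : ∀ t ∈ A, 0 ≤ t := fun t ht => (mem_Icc.1 (hA ht)).1
  have hAl : ∀ t ∈ A, t ≤ l := fun t ht => (mem_Icc.1 (hA ht)).2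
  have hB₀ : ∀ t ∈ B, 0 ≤ t := fun t ht => (mem_Icc.1 (hB ht)).1
  have hBm : ∀ t ∈ B, t ≤ m := fun t ht => (mem_Icc.1 (hB ht)).2
  have hEp : excess A B p ≤ 0 := not_lt.1 fun h => hpS (mem_add_of_excess_pos hA₀ hB₀ hp h)
  have hEq := le_excess_sub_one_of_add_notMem hAl hBm hml hqm hqS
  have hqp : q - 1 ≤ p := by
    by_contra! h
    have := excess_le_excess_add (A := A) (B := B) h.le
    omega
  set K := #A + #B - l - 2 - (if m = l then 1 else 0) with hK
  refine ⟨{x ∈ Ioc (q - 1) p | excess A B x < excess A B (x - 1) ∧ excess A B x ∈ Icc 1 K},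
    fun x hx => ?_, disjoint_left.2 fun x hx => ?_, fun x hx => ?_, ?_⟩
  · rw [mem_filter, mem_Ioc] at hx
    exact mem_Icc.2 ⟨by omega, by omega⟩
  · rw [mem_filter] at hx
    rw [mem_union, not_or]
    exact notMem_of_excess_lt hx.2.1
  · rw [mem_filter, mem_Ioc, mem_Icc] at hx
    obtain ⟨hxA, hxB⟩ := notMem_of_excess_lt hx.2.1
    exact ⟨mem_add_of_excess_pos hA₀ hB₀ (by omega) (by omega),
      add_mem_add_of_excess_le hAl hBm hml (by omega) hxA hxB (by omega)⟩
  · have := card_Icc_le_card_filter_drop (f := excess A B) excess_sub_one_le hqp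
      (lo := 1) (hi := K) (by split_ifs at hK <;> omega) (by omega)
    rw [Int.card_Icc] at this
    omega

theorem exists_Icc_subset_add_of_card_add_le {l m : ℤ} (hA : A ⊆ Icc 0 l) (h0A : 0 ∈ A)
    (hlA : l ∈ A) (hB : B ⊆ Icc 0 m) (h0B : 0 ∈ B) (hmB : m ∈ B) (hml : m ≤ l)
    (hl : l + 3 ≤ (#A + #B : ℤ))
    (hS : (#(A + B) : ℤ) ≤ #A + 2 * #B - 3 - if A ⊆ B then 1 else 0) :
    ∃ w : ℤ, Icc w (w + #A + #B - 2) ⊆ A + B := by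
  have hm : 0 ≤ m := (mem_Icc.1 (hB h0B)).2
  obtain ⟨p, q, hp, hpm, hpS, hq, hqm, hqS, hIcc⟩ :=
    exists_maximal_Icc_subset_add hA hB hm (by omega)
  by_cases hlong : (#A + #B : ℤ) ≤ q + l - p
  · exact ⟨p + 1, (Icc_subset_Icc le_rfl (by omega)).trans hIcc⟩
  exfalso
  obtain ⟨D, hDm, hDAB, hDS, hDcard⟩ :=
    exists_pairs_of_gaps hA hB hml hp hpm hpS hq hqm hqS (not_le.1 hlong)
  have hBS : ∀ c ∈ B, c ∈ A + B ∧ c + l ∈ A + B := fun c hc =>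
    ⟨mem_add.2 ⟨0, h0A, c, hc, zero_add c⟩, mem_add.2 ⟨l, hlA, c, hc, add_comm l c⟩⟩
  rcases hml.lt_or_eq with hlt | rfl
  · have hAB : ¬A ⊆ B := fun h => by have := mem_Icc.1 (hB (h hlA)); omega
    have := add_card_le_card_add hA hB hm hml hl (G := B ∪ D) (union_subset hB hDm)
      fun c hc => (mem_union.1 hc).elim (hBS c) (hDS c)
    rw [card_union_of_disjoint (disjoint_union_right.1 hDAB).2.symm] at this
    rw [if_neg hAB] at hS
    rw [if_neg hlt.ne] at hDcard
    push_cast at this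
    omega
  · have hAS : ∀ c ∈ A, c ∈ A + B ∧ c + m ∈ A + B := fun c hc =>
      ⟨mem_add.2 ⟨c, hc, 0, h0B, add_zero c⟩, mem_add.2 ⟨c, hc, m, hmB, rfl⟩⟩
    have := add_card_le_card_add hA hB hm le_rfl hl (G := A ∪ B ∪ D)
      (union_subset (union_subset hA hB) hDm)
      fun c hc => (mem_union.1 hc).elim (fun h => (mem_union.1 h).elim (hAS c) (hBS c)) (hDS c)
    rw [card_union_of_disjoint hDAB.symm] at this
    rw [if_pos rfl] at hDcard
    have hAB : #B + (if A ⊆ B then 0 else 1) ≤ #(A ∪ B) := by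
      split_ifs with h
      · exact card_le_card subset_union_right
      · exact card_lt_card (ssubset_of_subset_not_subset subset_union_right
          fun h' => h (subset_union_left.trans h'))
    split_ifs at hS hAB <;> push_cast at this <;> omega

end excess

lemma neg_min'_vadd_subset_Icc (X : Finset ℤ) (hX : X.Nonempty) :
    -X.min' hX +ᵥ X ⊆ Icc 0 (X.max' hX - X.min' hX) := fun t ht => by
  rw [mem_neg_vadd_finset_iff, vadd_eq_add] at ht
  have := X.min'_le _ ht
  have := X.le_max' _ ht
  exact mem_Icc.2 ⟨by omega, by omega⟩

lemma zero_mem_neg_min'_vadd (X : Finset ℤ) (hX : X.Nonempty) : 0 ∈ -X.min' hX +ᵥ X := by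
  rw [mem_neg_vadd_finset_iff, vadd_eq_add, add_zero]
  exact X.min'_mem hX

lemma max'_sub_min'_mem_neg_min'_vadd (X : Finset ℤ) (hX : X.Nonempty) :
    X.max' hX - X.min' hX ∈ -X.min' hX +ᵥ X := by
  rw [mem_neg_vadd_finset_iff, vadd_eq_add, add_sub_cancel]
  exact X.max'_mem hX

theorem stmt11 (A B : Finset ℤ) (hA : A.Nonempty) (hB : B.Nonempty)
    (hdiam1 : B.max' hB - B.min' hB ≤ A.max' hA - A.min' hA)
    (hdiam2 : A.max' hA - A.min' hA ≤ (A.card : ℤ) + (B.card : ℤ) - 3)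
    (hcard : ((A + B).card : ℤ) ≤ (A.card : ℤ) + 2 * (B.card : ℤ) - 3
      - (if ∃ x : ℤ, ∀ a ∈ A, x + a ∈ B then 1 else 0)) :
    ∃ a : ℤ, Finset.Icc a (a + (A.card : ℤ) + (B.card : ℤ) - 2) ⊆ A + B := by
  set a₀ := A.min' hA
  set b₀ := B.min' hB
  have hsum : (-a₀ +ᵥ A) + (-b₀ +ᵥ B) = -(a₀ + b₀) +ᵥ (A + B) := by
    rw [vadd_add_vadd, neg_add]
  have htranslate : (-a₀ +ᵥ A ⊆ -b₀ +ᵥ B) → ∃ x : ℤ, ∀ t ∈ A, x + t ∈ B := fun h =>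
    ⟨b₀ - a₀, fun t ht => by
      have := h (vadd_mem_vadd_finset ht)
      rwa [mem_neg_vadd_finset_iff, vadd_eq_add, vadd_eq_add, ← add_assoc, ← sub_eq_add_neg]
        at this⟩
  obtain ⟨w, hw⟩ := exists_Icc_subset_add_of_card_add_le (neg_min'_vadd_subset_Icc A hA)
    (zero_mem_neg_min'_vadd A hA) (max'_sub_min'_mem_neg_min'_vadd A hA)
    (neg_min'_vadd_subset_Icc B hB) (zero_mem_neg_min'_vadd B hB)
    (max'_sub_min'_mem_neg_min'_vadd B hB) hdiam1
    (by rw [card_vadd_finset, card_vadd_finset]; omega)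
    (by
      rw [hsum, card_vadd_finset, card_vadd_finset, card_vadd_finset]
      split_ifs at hcard ⊢ <;> first | omega | exact absurd (htranslate ‹_›) ‹_›)
  refine ⟨w + (a₀ + b₀), fun y hy => ?_⟩
  rw [card_vadd_finset, card_vadd_finset] at hw
  have := hw (mem_Icc.2 (show w ≤ y - (a₀ + b₀) ∧ y - (a₀ + b₀) ≤ w + #A + #B - 2 by
    rw [mem_Icc] at hy; omega))
  rwa [hsum, mem_neg_vadd_finset_iff, vadd_eq_add, add_sub_cancel] at this
end

section
/- Let A, B be finite nonempty sets of integers with gcd*(A) > 1 and gcd*(A+B) = 1. Then |A+B| ≥ 2|A| + |B| - 2. -/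
open scoped Pointwise

/-!
Let `d = gcd*(A) > 1`. If `d` divided every difference of `B`, it would divide every difference
of `A + B`, contradicting `gcd*(A + B) = 1`; so `B` meets at least two residue classes mod `d`.
Split `B = B₁ ⊔ B₂` into the part in the class of some `b₁ ∈ B` and the rest. Since `A` lies in a
single class, `A + B₁` and `A + B₂` are disjoint, and Cauchy–Davenport in `ℤ` gives
`|A + B| ≥ (|A| + |B₁| - 1) + (|A| + |B₂| - 1) = 2|A| + |B| - 2`.
-/

namespace Finset

section GCD

variable {α : Type*} [CommRing α] [NormalizedGCDMonoid α] [DecidableEq α]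

theorem gcd_image_sub_dvd_sub (S : Finset α) (c : α) {x y : α} (hx : x ∈ S) (hy : y ∈ S) :
    (S.image (· - c)).gcd id ∣ x - y := by
  have hx' : (S.image (· - c)).gcd id ∣ x - c := gcd_dvd (mem_image_of_mem (· - c) hx)
  have hy' : (S.image (· - c)).gcd id ∣ y - c := gcd_dvd (mem_image_of_mem (· - c) hy)
  simpa using dvd_sub hx' hy'

theorem dvd_gcd_image_sub {S : Finset α} {c d : α} (hc : c ∈ S)
    (h : ∀ x ∈ S, ∀ y ∈ S, d ∣ x - y) : d ∣ (S.image (· - c)).gcd id :=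
  dvd_gcd fun _ hz ↦ by
    obtain ⟨x, hx, rfl⟩ := mem_image.1 hz
    exact h x hx c hc

end GCD

section Coset

variable {G : Type*} [AddCommGroup G] {H : AddSubgroup G}

theorem sub_mem_of_mem_add {A B : Finset G} [DecidableEq G]
    (hA : ∀ x ∈ A, ∀ y ∈ A, x - y ∈ H) (hB : ∀ x ∈ B, ∀ y ∈ B, x - y ∈ H) :
    ∀ x ∈ A + B, ∀ y ∈ A + B, x - y ∈ H := by
  rintro _ hx _ hy
  obtain ⟨a, ha, b, hb, rfl⟩ := mem_add.1 hx
  obtain ⟨a', ha', b', hb', rfl⟩ := mem_add.1 hy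
  simpa [add_sub_add_comm] using H.add_mem (hA a ha a' ha') (hB b hb b' hb')

theorem disjoint_add_of_sub_mem [DecidableEq G] {A B₁ B₂ : Finset G} {b₀ : G}
    (hA : ∀ x ∈ A, ∀ y ∈ A, x - y ∈ H) (hB₁ : ∀ b ∈ B₁, b - b₀ ∈ H)
    (hB₂ : ∀ b ∈ B₂, b - b₀ ∉ H) : Disjoint (A + B₁) (A + B₂) := by
  rw [disjoint_left]
  rintro _ hx hx'
  obtain ⟨a, ha, b, hb, rfl⟩ := mem_add.1 hx
  obtain ⟨a', ha', b', hb', hsum⟩ := mem_add.1 hx'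
  have hdiff : b' - b₀ = (b - b₀) + (a - a') := by
    rw [← sub_eq_zero] at hsum ⊢; rw [← hsum]; abel
  exact hB₂ b' hb' (hdiff ▸ H.add_mem (hB₁ b hb) (hA a ha a' ha'))

variable [LinearOrder G] [IsOrderedAddMonoid G]

theorem two_mul_card_add_card_le_card_add {A B : Finset G} (hA : A.Nonempty)
    (hAH : ∀ x ∈ A, ∀ y ∈ A, x - y ∈ H) {b₁ b₂ : G} (hb₁ : b₁ ∈ B) (hb₂ : b₂ ∈ B)
    (hb : b₂ - b₁ ∉ H) : 2 * #A + #B ≤ #(A + B) + 2 := by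
  have := Classical.decPred (· ∈ H)
  set B₁ := B.filter (· - b₁ ∈ H)
  set B₂ := B.filter (· - b₁ ∉ H)
  have hB₁ : B₁.Nonempty := ⟨b₁, mem_filter.2 ⟨hb₁, by simp⟩⟩
  have hB₂ : B₂.Nonempty := ⟨b₂, mem_filter.2 ⟨hb₂, hb⟩⟩
  have hsplit : #B₁ + #B₂ = #B := card_filter_add_card_filter_not _
  have hunion : #(A + B₁) + #(A + B₂) ≤ #(A + B) := by
    rw [← card_union_of_disjoint (disjoint_add_of_sub_mem hAH (fun b hb ↦ (mem_filter.1 hb).2)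
      fun b hb ↦ (mem_filter.1 hb).2)]
    exact card_le_card (union_subset (add_subset_add_left (filter_subset _ _))
      (add_subset_add_left (filter_subset _ _)))
  have hcd₁ : #A + #B₁ - 1 ≤ #(A + B₁) := cauchy_davenport_add_of_linearOrder_isCancelAdd hA hB₁
  have hcd₂ : #A + #B₂ - 1 ≤ #(A + B₂) := cauchy_davenport_add_of_linearOrder_isCancelAdd hA hB₂
  have hA_pos := hA.card_pos
  omega

end Coset

end Finset

open Finset in
theorem stmt14 (A B : Finset ℤ) (hA : A.Nonempty) (hB : B.Nonempty)
    (hgcdA : 1 < (A.image (fun z => z - A.min' hA)).gcd id)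
    (hgcdAB : ((A + B).image (fun z => z - (A + B).min' (hA.add hB))).gcd id = 1) :
    (2 : ℤ) * (A.card : ℤ) + (B.card : ℤ) - 2 ≤ ((A + B).card : ℤ) := by
  set d := (A.image (fun z => z - A.min' hA)).gcd id
  have hA_dvd : ∀ x ∈ A, ∀ y ∈ A, x - y ∈ AddSubgroup.zmultiples d := fun x hx y hy ↦
    Int.mem_zmultiples_iff.2 (gcd_image_sub_dvd_sub A _ hx hy)
  obtain ⟨b₁, hb₁, b₂, hb₂, hb⟩ : ∃ b₁ ∈ B, ∃ b₂ ∈ B, b₂ - b₁ ∉ AddSubgroup.zmultiples d := by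
    by_contra! hB_dvd
    have hAB := sub_mem_of_mem_add hA_dvd fun x hx y hy ↦ hB_dvd y hy x hx
    have : d ∣ 1 := hgcdAB ▸ dvd_gcd_image_sub (min'_mem _ _)
      fun x hx y hy ↦ Int.mem_zmultiples_iff.1 (hAB x hx y hy)
    exact hgcdA.not_ge (Int.le_of_dvd one_pos this)
  have hcard := two_mul_card_add_card_le_card_add hA hA_dvd hb₁ hb₂ hb
  omega
end

section
/- Let A, B be finite nonempty sets of integers with min A = min B = 0, max A = M ≥ max B = N, and |A+B| = |A|+|B|-1+r with h_A = |[0,M]\A| ≤ |B|-2. Then the map sending each hole x ∈ [0, M+N] \ (A+B) to x_B (defined as x_B = x if x ≤ N-1, and x_B = x - M if x ≥ M+1) is an injection from [0,M+N]\(A+B) into [0,N]\B. -/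
open scoped Pointwise

theorem stmt16 (A B : Finset ℤ) (hA : A.Nonempty) (hB : B.Nonempty) (M N r : ℤ)
    (hminA : A.min' hA = 0) (hminB : B.min' hB = 0)
    (hmaxA : A.max' hA = M) (hmaxB : B.max' hB = N) (hMN : N ≤ M)
    (hr : ((A + B).card : ℤ) = (A.card : ℤ) + (B.card : ℤ) - 1 + r)
    (hhole : ((Finset.Icc 0 M \ A).card : ℤ) ≤ (B.card : ℤ) - 2) :
    (∀ x ∈ Finset.Icc 0 (M + N) \ (A + B),
        (if x ≤ N - 1 then x else x - M) ∈ Finset.Icc 0 N \ B) ∧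
    Set.InjOn (fun x => if x ≤ N - 1 then x else x - M)
      (↑(Finset.Icc 0 (M + N) \ (A + B)) : Set ℤ) := by
  have h0A : (0:ℤ) ∈ A := hminA ▸ A.min'_mem hA
  have hMA : M ∈ A := hmaxA ▸ A.max'_mem hA
  have h0B : (0:ℤ) ∈ B := hminB ▸ B.min'_mem hB
  have hNB : N ∈ B := hmaxB ▸ B.max'_mem hB
  have hbN : ∀ b ∈ B, 0 ≤ b ∧ b ≤ N := fun b hb =>
    ⟨hminB ▸ B.min'_le b hb, hmaxB ▸ B.le_max' b hb⟩
  have hN0 : (0:ℤ) ≤ N := (hbN N hNB).1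
  -- Claim 1 : [N, M] ⊆ A + B
  have key1 : ∀ x : ℤ, N ≤ x → x ≤ M → x ∈ A + B := by
    intro x hNx hxM
    by_contra hx
    have hsub : B.image (fun b => x - b) ⊆ Finset.Icc 0 M \ A := by
      intro w hw
      simp only [Finset.mem_image] at hw
      obtain ⟨b, hb, rfl⟩ := hw
      obtain ⟨hb0, hbn⟩ := hbN b hb
      refine Finset.mem_sdiff.mpr ⟨Finset.mem_Icc.mpr ⟨by linarith, by linarith⟩, ?_⟩
      intro hA'
      have := Finset.add_mem_add hA' hb
      simp only [sub_add_cancel] at this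
      exact hx this
    have hcard : (B.image (fun b => x - b)).card = B.card :=
      Finset.card_image_of_injective _ (fun a b h => by omega)
    have := Finset.card_le_card hsub
    rw [hcard] at this
    have : (B.card : ℤ) ≤ ((Finset.Icc 0 M \ A).card : ℤ) := by exact_mod_cast this
    linarith
  -- Claim 2 : no z ∈ [0, N] has both z and z + M holes of A + B
  have key2 : ∀ z : ℤ, 0 ≤ z → z ≤ N → z ∉ A + B → z + M ∉ A + B → False := by
    intro z hz0 hzN hz1 hz2
    set S1 := (B.filter (fun b => b ≤ z)).image (fun b => z - b) with hS1
    set S2 := (B.filter (fun b => z ≤ b)).image (fun b => z + M - b) with hS2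
    have hsub : S1 ∪ S2 ⊆ Finset.Icc 0 M \ A := by
      intro w hw
      rcases Finset.mem_union.mp hw with hw | hw
      · simp only [hS1, Finset.mem_image, Finset.mem_filter] at hw
        obtain ⟨b, ⟨hb, hbz⟩, rfl⟩ := hw
        obtain ⟨hb0, hbn⟩ := hbN b hb
        refine Finset.mem_sdiff.mpr ⟨Finset.mem_Icc.mpr ⟨by linarith, by linarith⟩, ?_⟩
        intro hA'
        have := Finset.add_mem_add hA' hb
        simp only [sub_add_cancel] at this
        exact hz1 this
      · simp only [hS2, Finset.mem_image, Finset.mem_filter] at hw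
        obtain ⟨b, ⟨hb, hbz⟩, rfl⟩ := hw
        obtain ⟨hb0, hbn⟩ := hbN b hb
        refine Finset.mem_sdiff.mpr ⟨Finset.mem_Icc.mpr ⟨by linarith, by linarith⟩, ?_⟩
        intro hA'
        have := Finset.add_mem_add hA' hb
        simp only [sub_add_cancel] at this
        exact hz2 this
    have hc1 : S1.card = (B.filter (fun b => b ≤ z)).card :=
      Finset.card_image_of_injective _ (fun a b h => by omega)
    have hc2 : S2.card = (B.filter (fun b => z ≤ b)).card :=
      Finset.card_image_of_injective _ (fun a b h => by omega)
    have hBcov : B ⊆ B.filter (fun b => b ≤ z) ∪ B.filter (fun b => z ≤ b) := by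
      intro b hb
      rcases le_total b z with h | h
      · exact Finset.mem_union_left _ (Finset.mem_filter.mpr ⟨hb, h⟩)
      · exact Finset.mem_union_right _ (Finset.mem_filter.mpr ⟨hb, h⟩)
    have hBcard : B.card ≤ (B.filter (fun b => b ≤ z)).card + (B.filter (fun b => z ≤ b)).card :=
      le_trans (Finset.card_le_card hBcov) (Finset.card_union_le _ _)
    have hinter : (S1 ∩ S2).card ≤ 1 := by
      have hsubz : S1 ∩ S2 ⊆ {z} := by
        intro w hw
        obtain ⟨hw1, hw2⟩ := Finset.mem_inter.mp hw
        simp only [hS1, Finset.mem_image, Finset.mem_filter] at hw1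
        obtain ⟨b, ⟨hb, hbz⟩, rfl⟩ := hw1
        simp only [hS2, Finset.mem_image, Finset.mem_filter] at hw2
        obtain ⟨c, ⟨hc, hcz⟩, hcw⟩ := hw2
        obtain ⟨hc0, hcn⟩ := hbN c hc
        obtain ⟨hb0, hbn⟩ := hbN b hb
        simp only [Finset.mem_singleton]
        omega
      simpa using Finset.card_le_card hsubz
    have hunion := Finset.card_union_add_card_inter S1 S2
    have hle := Finset.card_le_card hsub
    have hB2 : (2:ℤ) ≤ (B.card : ℤ) := by
      have : (0:ℤ) ≤ ((Finset.Icc 0 M \ A).card : ℤ) := by positivity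
      linarith
    have hcast : ((S1 ∪ S2).card : ℤ) ≤ ((Finset.Icc 0 M \ A).card : ℤ) := by exact_mod_cast hle
    have h1 : ((S1 ∪ S2).card : ℤ) + ((S1 ∩ S2).card : ℤ) = (S1.card : ℤ) + (S2.card : ℤ) := by
      exact_mod_cast hunion
    have h2 : ((S1 ∩ S2).card : ℤ) ≤ 1 := by exact_mod_cast hinter
    have h3 : (B.card : ℤ) ≤ (S1.card : ℤ) + (S2.card : ℤ) := by
      rw [hc1, hc2]; exact_mod_cast hBcard
    linarith
  constructor
  · intro x hx
    obtain ⟨hx1, hx2⟩ := Finset.mem_sdiff.mp hx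
    obtain ⟨hx0, hxMN⟩ := Finset.mem_Icc.mp hx1
    by_cases hxn : x ≤ N - 1
    · rw [if_pos hxn]
      refine Finset.mem_sdiff.mpr ⟨Finset.mem_Icc.mpr ⟨hx0, by linarith⟩, ?_⟩
      intro hxB
      have := Finset.add_mem_add h0A hxB
      simp only [zero_add] at this
      exact hx2 this
    · rw [if_neg hxn]
      push_neg at hxn
      have hxM : M < x := by
        by_contra h
        push_neg at h
        exact hx2 (key1 x (by linarith) h)
      refine Finset.mem_sdiff.mpr ⟨Finset.mem_Icc.mpr ⟨by linarith, by linarith⟩, ?_⟩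
      intro hxB
      have := Finset.add_mem_add hMA hxB
      simp only [add_sub_cancel] at this
      exact hx2 this
  · intro x hx y hy hxy
    simp only [Finset.coe_sdiff, Set.mem_diff, Finset.mem_coe, Finset.mem_Icc] at hx hy
    obtain ⟨⟨hx0, hxMN⟩, hx2⟩ := hx
    obtain ⟨⟨hy0, hyMN⟩, hy2⟩ := hy
    simp only at hxy
    by_cases hxn : x ≤ N - 1 <;> by_cases hyn : y ≤ N - 1
    · rwa [if_pos hxn, if_pos hyn] at hxy
    · rw [if_pos hxn, if_neg hyn] at hxy
      push_neg at hyn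
      exfalso
      exact key2 x hx0 (by linarith) hx2 (by rw [hxy]; simpa using hy2)
    · rw [if_neg hxn, if_pos hyn] at hxy
      push_neg at hxn
      exfalso
      exact key2 y hy0 (by linarith) hy2 (by rw [← hxy]; simpa using hx2)
    · rw [if_neg hxn, if_neg hyn] at hxy
      omega
end

section
/- Let A, B be finite nonempty sets of integers, and suppose the interval [a,b] ⊆ A + B where a = min(A+B) and some b. Let M = max A, N = max B. Then (A ∪ [a, b-N]) + (B ∪ [a, b-M]) = A + B. -/
/-!
Every element of `A` lies in `[0, M]` and every element of `B` in `[0, N]`, so adding an element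
of `A` to `[a, b - M]`, or an element of `B` to `[a, b - N]`, lands in `[a, b] ⊆ A + B`. Two
elements of the new intervals sum to at least `2a ≥ a`, because `a = min (A + B) ≥ 0`, and to at
most `2b - M - N ≤ b`: if `[a, b - N]` is nonempty then `b ∈ [a, b] ⊆ A + B`, so `b ≤ M + N`.
-/

open scoped Pointwise

namespace Finset

theorem subset_Icc_min'_max' {α : Type*} [LinearOrder α] [LocallyFiniteOrder α]
    (s : Finset α) (hs : s.Nonempty) : s ⊆ Icc (s.min' hs) (s.max' hs) :=
  fun x hx => mem_Icc.2 ⟨s.min'_le x hx, s.le_max' x hx⟩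

section OrderedAddCommGroup

variable {α : Type*} [AddCommGroup α] [PartialOrder α] [IsOrderedAddMonoid α]
  [LocallyFiniteOrder α] [DecidableEq α]

theorem add_subset_Icc_zero_add {A B : Finset α} {M N : α} (hA : A ⊆ Icc 0 M)
    (hB : B ⊆ Icc 0 N) : A + B ⊆ Icc 0 (M + N) := by
  simpa using (add_subset_add hA hB).trans (Icc_add_Icc_subset 0 M 0 N)

theorem add_Icc_sub_subset_Icc {A : Finset α} {M : α} (hA : A ⊆ Icc 0 M) (a b : α) :
    A + Icc a (b - M) ⊆ Icc a b :=
  calc A + Icc a (b - M) ⊆ Icc 0 M + Icc a (b - M) := add_subset_add_right hA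
    _ ⊆ Icc (0 + a) (M + (b - M)) := Icc_add_Icc_subset _ _ _ _
    _ = Icc a b := by rw [zero_add, add_sub_cancel]

theorem Icc_sub_add_Icc_sub_subset_Icc {a b M N : α} (ha : 0 ≤ a) (hb : b ≤ M + N) :
    Icc a (b - N) + Icc a (b - M) ⊆ Icc a b := by
  refine (Icc_add_Icc_subset _ _ _ _).trans (Icc_subset_Icc (le_add_of_nonneg_left ha) ?_)
  calc b - N + (b - M) = b - (M + N - b) := by abel
    _ ≤ b := sub_le_self _ (sub_nonneg.2 hb)

theorem union_Icc_add_union_Icc_eq {A B : Finset α} {M N a b : α} (hA : A ⊆ Icc 0 M)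
    (hB : B ⊆ Icc 0 N) (hN : 0 ≤ N) (ha : 0 ≤ a) (hJ : Icc a b ⊆ A + B) :
    (A ∪ Icc a (b - N)) + (B ∪ Icc a (b - M)) = A + B := by
  refine subset_antisymm ?_ (add_subset_add subset_union_left subset_union_left)
  have hAI : A + Icc a (b - M) ⊆ A + B := (add_Icc_sub_subset_Icc hA a b).trans hJ
  have hIB : Icc a (b - N) + B ⊆ A + B := by
    rw [add_comm]
    exact (add_Icc_sub_subset_Icc hB a b).trans hJ
  have hII : Icc a (b - N) + Icc a (b - M) ⊆ A + B := by
    by_cases hab : a ≤ b - N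
    · have hbJ : b ∈ A + B := hJ (right_mem_Icc.2 (hab.trans (sub_le_self b hN)))
      have hbMN : b ≤ M + N := (mem_Icc.1 (add_subset_Icc_zero_add hA hB hbJ)).2
      exact (Icc_sub_add_Icc_sub_subset_Icc ha hbMN).trans hJ
    · rw [Icc_eq_empty hab, empty_add]
      exact empty_subset _
  rw [union_add, add_union, add_union]
  exact union_subset (union_subset Subset.rfl hAI) (union_subset hIB hII)

end OrderedAddCommGroup

end Finset

theorem stmt18_general (A B : Finset ℤ) (hA : A.Nonempty) (hB : B.Nonempty) (M N a b : ℤ)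
    (hminA : A.min' hA = 0) (hminB : B.min' hB = 0)
    (hmaxA : A.max' hA = M) (hmaxB : B.max' hB = N)
    (ha : a = (A + B).min' (hA.add hB))
    (hJ : Finset.Icc a b ⊆ A + B) :
    (A ∪ Finset.Icc a (b - N)) + (B ∪ Finset.Icc a (b - M)) = A + B := by
  have hAM : A ⊆ Finset.Icc 0 M := hminA ▸ hmaxA ▸ A.subset_Icc_min'_max' hA
  have hBN : B ⊆ Finset.Icc 0 N := hminB ▸ hmaxB ▸ B.subset_Icc_min'_max' hB
  have hN : 0 ≤ N := hminB ▸ hmaxB ▸ B.min'_le_max' hB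
  have ha0 : 0 ≤ a := ha ▸ (A + B).le_min' _ 0 fun _ hx =>
    (Finset.mem_Icc.1 (Finset.add_subset_Icc_zero_add hAM hBN hx)).1
  exact Finset.union_Icc_add_union_Icc_eq hAM hBN hN ha0 hJ

theorem stmt18 (A B : Finset ℤ) (hA : A.Nonempty) (hB : B.Nonempty) (M N a b : ℤ)
    (hminA : A.min' hA = 0) (hminB : B.min' hB = 0)
    (hmaxA : A.max' hA = M) (hmaxB : B.max' hB = N) (hMN : N ≤ M)
    (ha : a = (A + B).min' (hA.add hB))
    (hb : N + a ≤ b)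
    (hJ : Finset.Icc a b ⊆ A + B) :
    (A ∪ Finset.Icc a (b - N)) + (B ∪ Finset.Icc a (b - M)) = A + B :=
  stmt18_general A B hA hB M N a b hminA hminB hmaxA hmaxB ha hJ
end
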